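/- arXiv:2005.11680 — 2 statements merged into one kernel-verified Lean document; each statement's English description precedes it below -/
import Mathlib

section
/- There is no tree T with leaf set {x_1,x_2,x_3,x_4} and edge weighting λ: E(T) → ℕ such that all pairwise leaf distances are positive and the exactly-2-relation graph equals the 4-cycle C_4. -/
open SimpleGraph

noncomputable def treePath {V : Type} (T : SimpleGraph V) (hT : T.IsTree) (x y : V) :
    T.Walk x y := (hT.existsUnique_path x y).choose

/-- The weighted distance between two vertices of a tree: the sum of the weights
`lam` over the edges of the unique path. -/
noncomputable def treeDist {V : Type} (T : SimpleGraph V) (hT : T.IsTree)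
    (lam : Sym2 V → ℕ) (x y : V) : ℕ :=
  ((treePath T hT x y).edges.map lam).sum

/-- A leaf of a tree: a vertex of degree at most one. -/
def IsLeaf {V : Type} (T : SimpleGraph V) (v : V) : Prop :=
  (T.neighborSet v).ncard ≤ 1

/-- `(T, lam)` explains the graph `G` w.r.t. the exactly-`k`-relation, where
`f` identifies the vertices of `G` with the leaves of `T`. -/
def ExplainedBy {α V : Type} (G : SimpleGraph α) (T : SimpleGraph V) (hT : T.IsTree)
    (lam : Sym2 V → ℕ) (f : α → V) (k : ℕ) : Prop :=
  Function.Injective f ∧ (∀ v : V, (∃ a, f a = v) ↔ IsLeaf T v) ∧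
    (∀ x y : α, G.Adj x y ↔ treeDist T hT lam (f x) (f y) = k)

/-- `G` can be explained w.r.t. the exactly-`k`-relation by some finite edge-weighted tree. -/
def Explainable {α : Type} (G : SimpleGraph α) (k : ℕ) : Prop :=
  ∃ (V : Type) (_ : Finite V) (T : SimpleGraph V) (hT : T.IsTree) (lam : Sym2 V → ℕ)
    (f : α → V), ExplainedBy G T hT lam f k

/-- `G` can be explained w.r.t. the exactly-`k`-relation by a tree in which all pairs of
distinct leaves are at positive weighted distance (discrete 0-relation). -/
def ExplainableDiscrete {α : Type} (G : SimpleGraph α) (k : ℕ) : Prop :=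
  ∃ (V : Type) (_ : Finite V) (T : SimpleGraph V) (hT : T.IsTree) (lam : Sym2 V → ℕ)
    (f : α → V), ExplainedBy G T hT lam f k ∧
      ∀ x y : α, x ≠ y → treeDist T hT lam (f x) (f y) ≠ 0

/-!
In a tree, the weighted distance of two vertices is the sum of `lam e` over the edges `e`
separating them, and the splits of the vertex set induced by two edges never cross. Hence tree
distances satisfy the four-point condition
`d(x,y) + d(z,w) ≤ max (d(x,z) + d(y,w)) (d(x,w) + d(y,z))` and the parity condition
`2 ∣ d(x,y) + d(y,z) + d(x,z)`. If the leaves `x₀ x₁ x₂ x₃` realize the 4-cycle, the four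
cycle distances equal 2, so parity makes `d(x₀,x₂)` and `d(x₁,x₃)` even, nonzero and different
from 2, hence at least 4 each, while the four-point condition bounds their sum by 4.
-/

section TreePath

variable {V : Type} {T : SimpleGraph V} (hT : T.IsTree)

theorem isPath_treePath (x y : V) : (treePath T hT x y).IsPath :=
  (hT.existsUnique_path x y).choose_spec.1

theorem eq_treePath {x y : V} {p : T.Walk x y} (hp : p.IsPath) : p = treePath T hT x y :=
  (hT.existsUnique_path x y).choose_spec.2 p hp

theorem treePath_edges_subset_of_mem_support {u v c : V} (hc : c ∈ (treePath T hT u v).support) :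
    (treePath T hT u c).edges ⊆ (treePath T hT u v).edges := by
  classical
  rw [← eq_treePath hT ((isPath_treePath hT u v).takeUntil hc)]
  exact Walk.edges_takeUntil_subset_edges _ hc

theorem notMem_treePath_edges_iff_reachable (e : Sym2 V) (x y : V) :
    e ∉ (treePath T hT x y).edges ↔ (T.deleteEdges {e}).Reachable x y := by
  refine ⟨fun h => ((treePath T hT x y).toDeleteEdge e h).reachable, ?_⟩
  classical
  rintro ⟨p⟩ he
  rw [← eq_treePath hT (p.bypass_isPath.mapLe (T.deleteEdges_le {e})),
    Walk.edges_mapLe_eq_edges] at he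
  simpa using p.bypass.edges_subset_edgeSet he

end TreePath

theorem SimpleGraph.Connected.reachable_deleteEdges_or {V : Type} {G : SimpleGraph V}
    (hG : G.Connected) (a b v : V) :
    (G.deleteEdges {s(a, b)}).Reachable v a ∨ (G.deleteEdges {s(a, b)}).Reachable v b := by
  suffices ∀ {t : V} (p : G.Walk v t), t = a →
      (G.deleteEdges {s(a, b)}).Reachable v a ∨ (G.deleteEdges {s(a, b)}).Reachable v b from
    this (hG.preconnected v a).some rfl
  intro t p ha
  induction p with
  | nil => exact Or.inl (ha ▸ .rfl)
  | @cons u w _ huw p ih =>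
    by_cases he : s(u, w) = s(a, b)
    · rcases Sym2.eq_iff.1 he with ⟨hua, -⟩ | ⟨hub, -⟩
      · exact Or.inl (hua ▸ .rfl)
      · exact Or.inr (hub ▸ .rfl)
    · have huw' : (G.deleteEdges {s(a, b)}).Adj u w := by simp [huw, he]
      exact (ih ha).imp huw'.reachable.trans huw'.reachable.trans

section Splits

variable {V : Type} {T : SimpleGraph V} (hT : T.IsTree)

theorem exists_side (e : Sym2 V) :
    ∃ σ : V → Bool, ∀ x y, e ∈ (treePath T hT x y).edges ↔ σ x ≠ σ y := by
  classical
  induction e using Sym2.ind with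
  | _ a b =>
  set R := (T.deleteEdges {s(a, b)}).Reachable
  refine ⟨fun v => decide (R v a), fun x y => ?_⟩
  rw [← not_iff_not, not_not, notMem_treePath_edges_iff_reachable, decide_eq_decide]
  refine ⟨fun hxy => ⟨hxy.symm.trans, hxy.trans⟩, fun hxy => ?_⟩
  by_cases hxa : R x a
  · exact hxa.trans (hxy.1 hxa).symm
  · have hxb := (hT.connected.reachable_deleteEdges_or a b x).resolve_left hxa
    have hyb := (hT.connected.reachable_deleteEdges_or a b y).resolve_left (mt hxy.2 hxa)
    exact hxb.trans hyb.symm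

theorem not_crossing_splits {e f : Sym2 V} {σ τ : V → Bool}
    (hσ : ∀ x y, e ∈ (treePath T hT x y).edges ↔ σ x ≠ σ y)
    (hτ : ∀ x y, f ∈ (treePath T hT x y).edges ↔ τ x ≠ τ y) {x y z w : V}
    (hσxz : σ x = σ z) (hσyw : σ y = σ w) (hσxy : σ x ≠ σ y)
    (hτxw : τ x = τ w) (hτyz : τ y = τ z) (hτxy : τ x ≠ τ y) : False := by
  induction f using Sym2.ind with
  | _ c d =>
  -- a path inside the side of `e` away from `c` cannot reach `c`, so it avoids `s(c, d)`
  have hτ_const : ∀ u v, σ u = σ v → σ u ≠ σ c → τ u = τ v := by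
    intro u v huv huc
    by_contra h
    have hc := Walk.fst_mem_support_of_mem_edges _ ((hτ u v).2 h)
    refine huc (not_not.1 fun h' => (hσ u v).1 ?_ huv)
    exact treePath_edges_subset_of_mem_support hT hc ((hσ u c).2 h')
  by_cases hxc : σ x = σ c
  · exact hτxy (hτxw.trans (hτ_const y w hσyw (hxc ▸ hσxy.symm)).symm)
  · exact hτxy ((hτ_const x z hσxz hxc).trans hτyz.symm)

end Splits

section FourPoint

variable {V : Type} {T : SimpleGraph V} (hT : T.IsTree) (lam : Sym2 V → ℕ)

theorem exists_treeDist_eq_sum_xor (P : List V) :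
    ∃ σ : Sym2 V → V → Bool, (∀ e x y, e ∈ (treePath T hT x y).edges ↔ σ e x ≠ σ e y) ∧
      ∃ S : Finset (Sym2 V), ∀ u v, u ∈ P → v ∈ P →
        treeDist T hT lam u v = ∑ e ∈ S, lam e * (xor (σ e u) (σ e v)).toNat := by
  classical
  choose σ hσ using exists_side hT
  refine ⟨σ, hσ, (P.flatMap fun u => P.flatMap fun v =>
    (treePath T hT u v).edges).toFinset, fun u v hu hv => ?_⟩
  have hxor : ∀ e, lam e * (xor (σ e u) (σ e v)).toNat =
      if e ∈ (treePath T hT u v).edges then lam e else 0 := by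
    intro e
    simp only [hσ e u v]
    cases σ e u <;> cases σ e v <;> simp
  rw [Finset.sum_congr rfl fun e _ => hxor e, ← Finset.sum_filter, treeDist,
    ← List.sum_toFinset lam (isPath_treePath hT u v).isTrail.edges_nodup]
  congr 1
  ext e
  simp only [Finset.mem_filter, List.mem_toFinset, List.mem_flatMap]
  exact ⟨fun he => ⟨⟨u, hu, v, hv, he⟩, he⟩, And.right⟩

theorem treeDist_add_le_max (x y z w : V) :
    treeDist T hT lam x y + treeDist T hT lam z w ≤
      max (treeDist T hT lam x z + treeDist T hT lam y w)
        (treeDist T hT lam x w + treeDist T hT lam y z) := by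
  obtain ⟨σ, hσ, S, hS⟩ := exists_treeDist_eq_sum_xor hT lam [x, y, z, w]
  simp (disch := simp) only [hS]
  simp only [← Finset.sum_add_distrib, ← mul_add]
  by_cases h : ∃ e, σ e x = σ e z ∧ σ e y = σ e w ∧ σ e x ≠ σ e y
  · obtain ⟨e, hxz, hyw, hxy⟩ := h
    refine le_max_of_le_right (Finset.sum_le_sum fun f _ => Nat.mul_le_mul_left _ ?_)
    have := fun hxw hyz hxy' => not_crossing_splits hT (hσ e) (hσ f) hxz hyw hxy hxw hyz hxy'
    revert this
    cases σ f x <;> cases σ f y <;> cases σ f z <;> cases σ f w <;> decide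
  · refine le_max_of_le_left (Finset.sum_le_sum fun f _ => Nat.mul_le_mul_left _ ?_)
    have := fun hxz hyw hxy => h ⟨f, hxz, hyw, hxy⟩
    revert this
    cases σ f x <;> cases σ f y <;> cases σ f z <;> cases σ f w <;> decide

theorem even_treeDist_add_add (x y z : V) :
    Even (treeDist T hT lam x y + treeDist T hT lam y z + treeDist T hT lam x z) := by
  obtain ⟨σ, -, S, hS⟩ := exists_treeDist_eq_sum_xor hT lam [x, y, z]
  simp (disch := simp) only [hS]
  simp only [← Finset.sum_add_distrib, ← mul_add]
  refine Finset.even_sum _ fun e _ => (Even.mul_left ?_ _)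
  cases σ e x <;> cases σ e y <;> cases σ e z <;> decide

end FourPoint

/-- The 4-cycle cannot be explained w.r.t. the exactly-2-relation by any weighted tree
with all pairwise leaf distances positive. -/
theorem stmt10 : ¬ ExplainableDiscrete (cycleGraph 4) 2 := by
  rintro ⟨V, -, T, hT, lam, f, ⟨-, -, hadj⟩, hpos⟩
  have d01 := (hadj 0 1).1 (by decide)
  have d12 := (hadj 1 2).1 (by decide)
  have d23 := (hadj 2 3).1 (by decide)
  have d03 := (hadj 0 3).1 (by decide)
  have d21 := (hadj 2 1).1 (by decide)
  have d02 := mt (hadj 0 2).2 (by decide)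
  have d13 := mt (hadj 1 3).2 (by decide)
  have d02pos := hpos 0 2 (by decide)
  have d13pos := hpos 1 3 (by decide)
  have four_point := treeDist_add_le_max hT lam (f 0) (f 2) (f 1) (f 3)
  obtain ⟨r, hr⟩ := even_treeDist_add_add hT lam (f 0) (f 1) (f 2)
  obtain ⟨s, hs⟩ := even_treeDist_add_add hT lam (f 1) (f 2) (f 3)
  omega
end

section
/- Let G be a finite graph in which neither C_4 nor K_4 − e occurs as an induced subgraph and which is chordal. If G contains a Hamiltonian cycle, then G is a complete graph. -/
/-!
Every cycle of a chordal diamond-free graph spans a clique, by induction on its length. A shortest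
chord of the cycle (counting the closing edge) cuts off a chordless cycle, which chordality forces
to be a triangle: some cycle vertex `b` has adjacent cycle neighbours `a` and `c`. Deleting `b`
leaves a shorter cycle, a clique by induction, so every other cycle vertex `w` is adjacent to `a`
and `c`; were `b` and `w` not adjacent, `{a, b, c, w}` would induce a diamond. Applied to a
Hamiltonian cycle, this makes the whole graph complete.
-/

open SimpleGraph

namespace SimpleGraph

variable {α : Type*} {G : SimpleGraph α}

abbrev diamond : SimpleGraph (Fin 4) := (⊤ : SimpleGraph (Fin 4)).deleteEdges {s(0, 1)}

theorem adj_of_isEmpty_diamond_embedding (hG : IsEmpty (diamond ↪g G)) {a b c d : α}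
    (hab : a ≠ b) (hcd : G.Adj c d) (hac : G.Adj a c) (had : G.Adj a d) (hbc : G.Adj b c)
    (hbd : G.Adj b d) : G.Adj a b := by
  by_contra hnab
  have hv : Function.Injective ![a, b, c, d] := by
    intro u w h
    fin_cases u <;> fin_cases w <;> simp_all [hac.ne, had.ne, hbc.ne, hbd.ne, hcd.ne]
  refine hG.false ⟨⟨_, hv⟩, fun {u w} => ?_⟩
  fin_cases u <;> fin_cases w <;> simp [hnab, hac, had, hbc, hbd, hcd, G.adj_comm]

theorem cycleGraph_adj_iff_of_lt {n : ℕ} {u w : Fin n} (h : u < w) :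
    (cycleGraph n).Adj u w ↔ (w : ℕ) = u + 1 ∨ ((u : ℕ) = 0 ∧ (w : ℕ) = n - 1) := by
  rw [cycleGraph_adj', Fin.coe_sub_iff_lt.mpr h, Fin.coe_sub_iff_le.mpr h.le]
  omega

/-- A cycle of `G` listed as `v 0, …, v (m - 1)`; indexing by `ℕ` turns arcs of the cycle and
deletions of a vertex into index arithmetic. -/
structure IsCycleSeq (G : SimpleGraph α) (v : ℕ → α) (m : ℕ) : Prop where
  injOn : Set.InjOn v (Set.Iio m)
  adj_succ : ∀ i, i + 1 < m → G.Adj (v i) (v (i + 1))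
  adj_last : G.Adj (v (m - 1)) (v 0)

namespace IsCycleSeq

variable {v : ℕ → α} {m : ℕ}

theorem nonempty_cycleGraph_embedding (hv : IsCycleSeq G v m)
    (hchordless :
      ∀ i j, i + 1 < j → j < m → ¬(i = 0 ∧ j = m - 1) → ¬G.Adj (v i) (v j)) :
    Nonempty (cycleGraph m ↪g G) := by
  have hlt : ∀ u w : Fin m, u < w → (G.Adj (v u) (v w) ↔ (cycleGraph m).Adj u w) := by
    intro u w huw
    rw [cycleGraph_adj_iff_of_lt huw]
    have huw' : (u : ℕ) < w := huw
    constructor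
    · intro h
      by_contra hne
      exact hchordless u w (by omega) w.isLt (by omega) h
    · rintro (h | ⟨hu, hw⟩)
      · rw [h]; exact hv.adj_succ u (by omega)
      · rw [hu, hw]; exact hv.adj_last.symm
  refine ⟨⟨⟨fun i => v i, fun u w h => Fin.ext (hv.injOn u.isLt w.isLt h)⟩,
    fun {u w} => ?_⟩⟩
  rcases lt_trichotomy u w with h | rfl | h
  · exact hlt u w h
  · simp
  · rw [G.adj_comm, (cycleGraph m).adj_comm]
    exact hlt w u h

theorem arc (hv : IsCycleSeq G v m) {a k : ℕ} (hak : a + k < m)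
    (hadj : G.Adj (v a) (v (a + k))) :
    IsCycleSeq G (fun i => v (a + i)) (k + 1) where
  injOn i hi j hj h := by
    simp only [Set.mem_Iio] at hi hj
    have := hv.injOn (Set.mem_Iio.mpr (by omega : a + i < m))
      (Set.mem_Iio.mpr (by omega : a + j < m)) h
    omega
  adj_succ i hi := hv.adj_succ (a + i) (by omega)
  adj_last := by simpa using hadj.symm

theorem exists_ear (hv : IsCycleSeq G v m) (hm : 3 ≤ m)
    (hchordal : ∀ n, 4 ≤ n → IsEmpty (cycleGraph n ↪g G)) :
    ∃ a, a + 2 < m ∧ G.Adj (v a) (v (a + 2)) := by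
  classical
  -- a chord `(a, a + k)` with `k` minimal closes a chordless cycle
  have hchord : ∃ k, 2 ≤ k ∧ ∃ a, a + k < m ∧ G.Adj (v a) (v (a + k)) :=
    ⟨m - 1, by omega, 0, by omega, by simpa using hv.adj_last.symm⟩
  obtain ⟨hk, a, hak, hadj⟩ := Nat.find_spec hchord
  set k := Nat.find hchord
  by_cases hk2 : k = 2
  · rw [hk2] at hak hadj
    exact ⟨a, hak, hadj⟩
  exfalso
  obtain ⟨e⟩ := (hv.arc hak hadj).nonempty_cycleGraph_embedding fun i j hij hj hend h => by
    refine Nat.find_min hchord (m := j - i) (by omega) ⟨by omega, a + i, by omega, ?_⟩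
    rwa [show a + i + (j - i) = a + j by omega]
  exact (hchordal (k + 1) (by omega)).false e

theorem eraseEar (hv : IsCycleSeq G v m) {a : ℕ} (ha : a + 2 < m)
    (hear : G.Adj (v a) (v (a + 2))) :
    IsCycleSeq G (fun i => v (if i ≤ a then i else i + 1)) (m - 1) where
  injOn i hi j hj h := by
    simp only [Set.mem_Iio] at hi hj
    have := hv.injOn (Set.mem_Iio.mpr (by split_ifs <;> omega))
      (Set.mem_Iio.mpr (by split_ifs <;> omega)) h
    split_ifs at this <;> omega
  adj_succ i hi := by
    rcases lt_trichotomy i a with h | rfl | h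
    · rw [if_pos (by omega), if_pos (by omega)]
      exact hv.adj_succ i (by omega)
    · rw [if_pos le_rfl, if_neg (by omega)]
      exact hear
    · rw [if_neg (by omega), if_neg (by omega)]
      exact hv.adj_succ (i + 1) (by omega)
  adj_last := by
    simpa [show ¬(m - 1 - 1 ≤ a) by omega, show m - 1 - 1 + 1 = m - 1 by omega] using hv.adj_last

theorem adj_of_ne (hdiamond : IsEmpty (diamond ↪g G))
    (hchordal : ∀ n, 4 ≤ n → IsEmpty (cycleGraph n ↪g G)) (hv : IsCycleSeq G v m) :
    ∀ i < m, ∀ j < m, i ≠ j → G.Adj (v i) (v j) := by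
  induction m generalizing v with
  | zero => intro i hi; omega
  | succ m ih =>
  intro i hi j hj hij
  by_cases hm : m + 1 < 3
  · rcases (by omega : i = 0 ∧ j = 1 ∨ i = 1 ∧ j = 0) with ⟨rfl, rfl⟩ | ⟨rfl, rfl⟩
    · exact hv.adj_succ 0 (by omega)
    · exact (hv.adj_succ 0 (by omega)).symm
  obtain ⟨a, ha, hear⟩ := hv.exists_ear (by omega) hchordal
  have hrest :
      ∀ i < m + 1, ∀ j < m + 1, i ≠ a + 1 → j ≠ a + 1 → i ≠ j →
        G.Adj (v i) (v j) := by
    have hpre : ∀ i < m + 1, i ≠ a + 1 → ∃ i' < m, (if i' ≤ a then i' else i' + 1) = i :=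
      fun i hi hia =>
        ⟨if i ≤ a then i else i - 1, by split_ifs <;> omega, by split_ifs <;> omega⟩
    intro i hi j hj hia hja hij
    obtain ⟨i', hi', rfl⟩ := hpre i hi hia
    obtain ⟨j', hj', rfl⟩ := hpre j hj hja
    exact ih (hv.eraseEar ha hear) i' hi' j' hj' (by rintro rfl; exact hij rfl)
  have hear_adj : ∀ j < m + 1, j ≠ a + 1 → G.Adj (v (a + 1)) (v j) := by
    intro j hj hja
    by_cases hj0 : j = a
    · exact hj0 ▸ (hv.adj_succ a (by omega)).symm
    by_cases hj2 : j = a + 2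
    · exact hj2 ▸ hv.adj_succ (a + 1) (by omega)
    refine adj_of_isEmpty_diamond_embedding hdiamond (fun h => hja (hv.injOn ?_ ?_ h).symm)
      hear (hv.adj_succ a (by omega)).symm (hv.adj_succ (a + 1) (by omega))
      (hrest j hj a (by omega) hja (by omega) hj0) (hrest j hj (a + 2) ha hja (by omega) hj2)
    all_goals simp only [Set.mem_Iio]; omega
  by_cases hia : i = a + 1
  · exact hia ▸ hear_adj j hj (hia ▸ hij.symm)
  by_cases hja : j = a + 1
  · exact hja ▸ (hear_adj i hi (hja ▸ hij)).symm
  exact hrest i hi j hj hia hja hij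

end IsCycleSeq

theorem Walk.IsCycle.isCycleSeq {u : α} {p : G.Walk u u} (hp : p.IsCycle) :
    IsCycleSeq G p.getVert p.length where
  injOn i hi j hj h := hp.getVert_injOn' (by simp only [Set.mem_Iio] at hi; simp; omega)
    (by simp only [Set.mem_Iio] at hj; simp; omega) h
  adj_succ i hi := p.adj_getVert_succ (by omega)
  adj_last := by
    have h3 := hp.three_le_length
    have h := p.adj_getVert_succ (i := p.length - 1) (by omega)
    rw [Nat.sub_add_cancel (by omega), p.getVert_length] at h
    rwa [p.getVert_zero]

end SimpleGraph

theorem stmt15_general {α : Type} [Fintype α] [DecidableEq α] (G : SimpleGraph α)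
    (hdiamond : IsEmpty (((⊤ : SimpleGraph (Fin 4)).deleteEdges {s(0, 1)}) ↪g G))
    (hchordal : ∀ n, 4 ≤ n → IsEmpty (cycleGraph n ↪g G))
    (hham : G.IsHamiltonian) :
    ∀ x y : α, x ≠ y → G.Adj x y := by
  intro x y hxy
  have : Nontrivial α := ⟨x, y, hxy⟩
  obtain ⟨p, hp⟩ := hham.exists_isHamiltonianCycle x
  obtain ⟨j, rfl, hj⟩ := Walk.mem_support_iff_exists_getVert.mp (hp.mem_support y)
  have hjx : j ≠ p.length := by rintro rfl; exact hxy p.getVert_length.symm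
  have h0j : 0 ≠ j := by rintro rfl; exact hxy p.getVert_zero.symm
  simpa using hp.isCycle.isCycleSeq.adj_of_ne hdiamond hchordal 0 (by omega) j (by omega) h0j

/-- A finite graph with no induced C_4, no induced K_4 − e, and chordal (no induced
cycle of length ≥ 4), which contains a Hamiltonian cycle, is complete. -/
theorem stmt15 {α : Type} [Fintype α] [DecidableEq α] (G : SimpleGraph α)
    (hC4 : IsEmpty (cycleGraph 4 ↪g G))
    (hdiamond : IsEmpty (((⊤ : SimpleGraph (Fin 4)).deleteEdges {s(0, 1)}) ↪g G))
    (hchordal : ∀ n, 4 ≤ n → IsEmpty (cycleGraph n ↪g G))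
    (hham : G.IsHamiltonian) :
    ∀ x y : α, x ≠ y → G.Adj x y :=
  stmt15_general G hdiamond hchordal hham
end
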